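/- Let X ⊆ ℝⁿ be convex and compact, let R: ℝⁿ → ℝ be differentiable on an open set containing X and σ_R-strongly convex with respect to ‖·‖, and let D_R(x, y) = R(x) − R(y) − ⟨∇R(y), x − y⟩ be the associated Bregman divergence. Let x_t ∈ X, g ∈ ℝⁿ, α > 0, and let x_{t+1} be a minimizer over X of x ↦ ⟨g, x − x_t⟩ + D_R(x, x_t)/α. Then for every x ∈ X: D_R(x, x_{t+1}) ≤ D_R(x, x_t) + α ⟨g, x − x_t⟩ + (α²/(2σ_R)) ‖g‖_*². -/

import Mathlib

open MeasureTheory Filter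
open scoped RealInnerProductSpace

/-! The first-order optimality condition of `x_{t+1}` on the convex set `X` gives
`⟨∇R(x_t) − ∇R(x_{t+1}), x − x_{t+1}⟩ ≤ α ⟨g, x − x_{t+1}⟩`, and the three-point identity of
Bregman divergences turns this into
`D(x, x_{t+1}) ≤ D(x, x_t) − D(x_{t+1}, x_t) + α ⟨g, x − x_t⟩ + α ⟨g, x_t − x_{t+1}⟩`.
Strong convexity bounds `D(x_{t+1}, x_t)` below by `σ/2 ‖x_{t+1} − x_t‖²`, while the last term is
at most `α ‖g‖_* ‖x_{t+1} − x_t‖ ≤ σ/2 ‖x_{t+1} − x_t‖² + α²/(2σ) ‖g‖_*²`. -/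

/-- `N` is a norm on a real vector space. -/
def IsNorm {E : Type*} [AddCommGroup E] [Module ℝ E] (N : E → ℝ) : Prop :=
  (∀ x, N x = 0 ↔ x = 0) ∧ (∀ (c : ℝ) (x : E), N (c • x) = |c| * N x) ∧
    ∀ x y, N (x + y) ≤ N x + N y

/-- The dual norm `‖y‖_* = sup { ⟨y, x⟩ : N x ≤ 1 }` of a norm `N` on `ℝⁿ`. -/
noncomputable def dualNorm {n : ℕ} (N : EuclideanSpace ℝ (Fin n) → ℝ)
    (y : EuclideanSpace ℝ (Fin n)) : ℝ :=
  sSup ((fun x => ⟪y, x⟫) '' {x | N x ≤ 1})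

/-- The Bregman divergence `D_R(x, y) = R(x) − R(y) − ⟨∇R(y), x − y⟩`. -/
noncomputable def bregman {n : ℕ} (R : EuclideanSpace ℝ (Fin n) → ℝ)
    (x y : EuclideanSpace ℝ (Fin n)) : ℝ :=
  R x - R y - ⟪gradient R y, x - y⟫

namespace IsNorm

variable {E : Type*} [NormedAddCommGroup E] [NormedSpace ℝ E] {N : E → ℝ}

noncomputable def toSeminorm (hN : IsNorm N) : Seminorm ℝ E where
  toFun := N
  map_zero' := (hN.1 0).2 rfl
  add_le' := hN.2.2
  neg' x := by simpa using hN.2.1 (-1) x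
  smul' a x := hN.2.1 a x

lemma nonneg (hN : IsNorm N) (x : E) : 0 ≤ N x :=
  apply_nonneg hN.toSeminorm x

lemma map_neg (hN : IsNorm N) (x : E) : N (-x) = N x :=
  map_neg_eq_map hN.toSeminorm x

lemma pos (hN : IsNorm N) {x : E} (hx : x ≠ 0) : 0 < N x :=
  (hN.nonneg x).lt_of_ne fun h => hx ((hN.1 x).1 h.symm)

lemma map_inv_smul_self (hN : IsNorm N) {x : E} (hx : x ≠ 0) : N ((N x)⁻¹ • x) = 1 := by
  rw [hN.2.1, abs_of_pos (inv_pos.2 (hN.pos hx)), inv_mul_cancel₀ (hN.pos hx).ne']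

lemma continuous [FiniteDimensional ℝ E] (hN : IsNorm N) : Continuous N :=
  continuousOn_univ.1 (hN.toSeminorm.convexOn.continuousOn isOpen_univ)

lemma exists_pos_mul_norm_le [FiniteDimensional ℝ E] (hN : IsNorm N) :
    ∃ c > 0, ∀ x, c * ‖x‖ ≤ N x := by
  rcases subsingleton_or_nontrivial E with hE | hE
  · exact ⟨1, one_pos, fun x => by simp [Subsingleton.elim x 0, (hN.1 0).2 rfl]⟩
  obtain ⟨z, hz, hmin⟩ := (isCompact_sphere (0 : E) 1).exists_isMinOn
    (NormedSpace.sphere_nonempty.2 zero_le_one) hN.continuous.continuousOn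
  have hz0 : z ≠ 0 := ne_zero_of_mem_unit_sphere ⟨z, hz⟩
  refine ⟨N z, hN.pos hz0, fun x => ?_⟩
  rcases eq_or_ne x 0 with rfl | hx
  · simp [(hN.1 0).2 rfl]
  have hxpos : 0 < ‖x‖ := norm_pos_iff.2 hx
  have hunit : ‖x‖⁻¹ • x ∈ Metric.sphere (0 : E) 1 := by
    simp [norm_smul, hxpos.ne']
  have hle : N z ≤ N (‖x‖⁻¹ • x) := hmin hunit
  rw [hN.2.1, abs_of_pos (inv_pos.2 hxpos), le_inv_mul_iff₀ hxpos] at hle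
  rwa [mul_comm]

end IsNorm

-- `dualNorm` is an `sSup` in `ℝ`, hence junk unless this set is bounded.
lemma IsNorm.bddAbove_inner_image {F : Type*} [NormedAddCommGroup F] [InnerProductSpace ℝ F]
    [FiniteDimensional ℝ F] {N : F → ℝ} (hN : IsNorm N) (y : F) :
    BddAbove ((fun x => ⟪y, x⟫) '' {x | N x ≤ 1}) := by
  obtain ⟨c, hc, hlow⟩ := hN.exists_pos_mul_norm_le
  refine ⟨‖y‖ * (1 / c), ?_⟩
  rintro _ ⟨x, hx, rfl⟩
  have hxc : ‖x‖ ≤ 1 / c := (le_div_iff₀' hc).2 ((hlow x).trans hx)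
  exact (real_inner_le_norm y x).trans (mul_le_mul_of_nonneg_left hxc (norm_nonneg y))

lemma IsNorm.inner_le_dualNorm_mul {n : ℕ} {N : EuclideanSpace ℝ (Fin n) → ℝ} (hN : IsNorm N)
    (y x : EuclideanSpace ℝ (Fin n)) : ⟪y, x⟫ ≤ dualNorm N y * N x := by
  rcases eq_or_ne x 0 with rfl | hx
  · simp [(hN.1 0).2 rfl]
  have hunit : ⟪y, (N x)⁻¹ • x⟫ ≤ dualNorm N y :=
    le_csSup (hN.bddAbove_inner_image y) ⟨_, (hN.map_inv_smul_self hx).le, rfl⟩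
  rwa [real_inner_smul_right, inv_mul_le_iff₀ (hN.pos hx), mul_comm] at hunit

theorem IsMinOn.inner_gradient_nonneg {F : Type*} [NormedAddCommGroup F] [InnerProductSpace ℝ F]
    [CompleteSpace F] {f : F → ℝ} {s : Set F} {a b f' : F} (hs : Convex ℝ s) (ha : a ∈ s)
    (hb : b ∈ s) (hmin : IsMinOn f s a) (hf : HasGradientAt f f' a) : 0 ≤ ⟪f', b - a⟫ := by
  simpa using hmin.localize.hasFDerivWithinAt_nonneg hf.hasFDerivAt.hasFDerivWithinAt
    (sub_mem_posTangentConeAt_of_segment_subset (hs.segment_subset ha hb))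

section Bregman

variable {n : ℕ} {R : EuclideanSpace ℝ (Fin n) → ℝ}

lemma bregman_three_point (x y z : EuclideanSpace ℝ (Fin n)) :
    bregman R x y = bregman R x z - bregman R y z + ⟪gradient R z - gradient R y, x - y⟫ := by
  simp only [bregman, inner_sub_left, inner_sub_right]
  ring

lemma hasGradientAt_inner_sub_add_bregman_div (g z : EuclideanSpace ℝ (Fin n)) (α : ℝ)
    {y : EuclideanSpace ℝ (Fin n)} (hR : DifferentiableAt ℝ R y) :
    HasGradientAt (fun x => ⟪g, x - z⟫ + bregman R x z / α)
      (g + α⁻¹ • (gradient R y - gradient R z)) y := by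
  have hlin (w : EuclideanSpace ℝ (Fin n)) :
      HasFDerivAt (fun x => ⟪w, x - z⟫) (innerSL ℝ w) y := by
    simpa [inner_sub_right] using (innerSL ℝ w).hasFDerivAt.sub_const ⟪w, z⟫
  have h := (hlin g).add <|
    ((hR.hasGradientAt.hasFDerivAt.sub_const (R z)).sub (hlin (gradient R z))).const_mul α⁻¹
  rw [hasGradientAt_iff_hasFDerivAt]
  refine (h.congr_fderiv ?_).congr_of_eventuallyEq (.of_forall fun x => ?_)
  · ext v
    simp
  · simp [bregman, div_eq_inv_mul]

lemma inner_gradient_sub_le_of_isMinOn {X : Set (EuclideanSpace ℝ (Fin n))}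
    {g x y z : EuclideanSpace ℝ (Fin n)} {α : ℝ} (hα : 0 < α) (hX : Convex ℝ X) (hy : y ∈ X)
    (hx : x ∈ X) (hR : DifferentiableAt ℝ R y)
    (hmin : IsMinOn (fun x => ⟪g, x - z⟫ + bregman R x z / α) X y) :
    ⟪gradient R z - gradient R y, x - y⟫ ≤ α * ⟪g, x - y⟫ := by
  have h := mul_nonneg hα.le <|
    hmin.inner_gradient_nonneg hX hy hx (hasGradientAt_inner_sub_add_bregman_div g z α hR)
  rw [inner_add_left, real_inner_smul_left, mul_add, ← mul_assoc, mul_inv_cancel₀ hα.ne',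
    one_mul] at h
  rw [← neg_sub, inner_neg_left]
  linarith

end Bregman

lemma mul_le_half_mul_sq_add_sq_div {σ : ℝ} (hσ : 0 < σ) (a b : ℝ) :
    a * b ≤ σ / 2 * b ^ 2 + a ^ 2 / (2 * σ) := by
  have key : σ / 2 * b ^ 2 + a ^ 2 / (2 * σ) - a * b = (σ * b - a) ^ 2 / (2 * σ) := by
    field_simp
    ring
  rw [← sub_nonneg, key]
  positivity

theorem mirror_descent_step_general {n : ℕ}
    (nrm : EuclideanSpace ℝ (Fin n) → ℝ) (hnrm : IsNorm nrm)
    (Xs : Set (EuclideanSpace ℝ (Fin n))) (hXconv : Convex ℝ Xs)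
    (R : EuclideanSpace ℝ (Fin n) → ℝ) (σR : ℝ) (hσR : 0 < σR)
    (O : Set (EuclideanSpace ℝ (Fin n))) (hXO : Xs ⊆ O)
    (hRdiff : ∀ x ∈ O, DifferentiableAt ℝ R x)
    (hRstrong : ∀ x ∈ O, ∀ y ∈ O,
      R y ≥ R x + ⟪gradient R x, y - x⟫ + σR / 2 * (nrm (y - x)) ^ 2)
    (xt : EuclideanSpace ℝ (Fin n)) (hxt : xt ∈ Xs)
    (g : EuclideanSpace ℝ (Fin n)) (α : ℝ) (hα : 0 < α)
    (xnext : EuclideanSpace ℝ (Fin n)) (hxnext : xnext ∈ Xs)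
    (hmin : ∀ x ∈ Xs,
      ⟪g, xnext - xt⟫ + bregman R xnext xt / α ≤ ⟪g, x - xt⟫ + bregman R x xt / α) :
    ∀ x ∈ Xs,
      bregman R x xnext ≤
        bregman R x xt + α * ⟪g, x - xt⟫ + α ^ 2 / (2 * σR) * (dualNorm nrm g) ^ 2 := by
  intro x hx
  set d := dualNorm nrm g
  set s := nrm (xnext - xt)
  have hopt := inner_gradient_sub_le_of_isMinOn hα hXconv hxnext hx
    (hRdiff xnext (hXO hxnext)) (isMinOn_iff.2 hmin)
  have hstrong : σR / 2 * s ^ 2 ≤ bregman R xnext xt := by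
    have := hRstrong xt (hXO hxt) xnext (hXO hxnext)
    rw [bregman]
    linarith
  have hdual : ⟪g, xt - xnext⟫ ≤ d * s := by
    have := hnrm.inner_le_dualNorm_mul g (xt - xnext)
    rwa [← hnrm.map_neg, neg_sub] at this
  have hyoung := mul_le_half_mul_sq_add_sq_div hσR (α * d) s
  rw [mul_pow, mul_div_right_comm] at hyoung
  have hsplit : ⟪g, x - xnext⟫ = ⟪g, x - xt⟫ + ⟪g, xt - xnext⟫ := by
    rw [← inner_add_right, sub_add_sub_cancel]
  rw [hsplit, mul_add] at hopt
  calc bregman R x xnext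
      = bregman R x xt - bregman R xnext xt + ⟪gradient R xt - gradient R xnext, x - xnext⟫ :=
        bregman_three_point x xnext xt
    _ ≤ bregman R x xt - σR / 2 * s ^ 2 + α * ⟪g, x - xt⟫ + α * d * s := by
        linarith [mul_le_mul_of_nonneg_left hdual hα.le]
    _ ≤ bregman R x xt + α * ⟪g, x - xt⟫ + α ^ 2 / (2 * σR) * d ^ 2 := by linarith

/-- One-step mirror-descent inequality: if `x_{t+1}` minimizes
`x ↦ ⟨g, x − x_t⟩ + D_R(x, x_t)/α` over `X`, then for every `x ∈ X`,
`D_R(x, x_{t+1}) ≤ D_R(x, x_t) + α ⟨g, x − x_t⟩ + (α²/(2σ_R)) ‖g‖_*²`. -/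
theorem mirror_descent_step {n : ℕ}
    (nrm : EuclideanSpace ℝ (Fin n) → ℝ) (hnrm : IsNorm nrm)
    (Xs : Set (EuclideanSpace ℝ (Fin n))) (hXconv : Convex ℝ Xs) (hXcomp : IsCompact Xs)
    (R : EuclideanSpace ℝ (Fin n) → ℝ) (σR : ℝ) (hσR : 0 < σR)
    (O : Set (EuclideanSpace ℝ (Fin n))) (hO : IsOpen O) (hXO : Xs ⊆ O)
    (hRdiff : ∀ x ∈ O, DifferentiableAt ℝ R x)
    (hRstrong : ∀ x ∈ O, ∀ y ∈ O,
      R y ≥ R x + ⟪gradient R x, y - x⟫ + σR / 2 * (nrm (y - x)) ^ 2)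
    (xt : EuclideanSpace ℝ (Fin n)) (hxt : xt ∈ Xs)
    (g : EuclideanSpace ℝ (Fin n)) (α : ℝ) (hα : 0 < α)
    (xnext : EuclideanSpace ℝ (Fin n)) (hxnext : xnext ∈ Xs)
    (hmin : ∀ x ∈ Xs,
      ⟪g, xnext - xt⟫ + bregman R xnext xt / α ≤ ⟪g, x - xt⟫ + bregman R x xt / α) :
    ∀ x ∈ Xs,
      bregman R x xnext ≤
        bregman R x xt + α * ⟪g, x - xt⟫ + α ^ 2 / (2 * σR) * (dualNorm nrm g) ^ 2 :=
  mirror_descent_step_general nrm hnrm Xs hXconv R σR hσR O hXO hRdiff hRstrong xt hxt g α hα xnext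
    hxnext hmin
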